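/- arXiv:1404.4068 — 2 statements merged into one kernel-verified Lean document; each statement's English description precedes it below -/
import Mathlib

section
/- For a probability density p on (0,∞), T[p] is a nonnegative function with ∫₀^∞ T[p](x) dx = 1, i.e., T maps probability densities to probability densities. -/
open MeasureTheory Real Set

noncomputable def T (p : ℝ → ℝ) (x : ℝ) : ℝ :=
  (1/2) * (∫ u in (0:ℝ)..x, p (x - u) * ∫ v in Ioi u, p v / v)
    + (1/2) * ∫ u in Ioi x, p u / u

open scoped Convolution

/-!
For `x > 0` one has `T[p] = (Q ⋆ p + Q) / 2` with `Q u = ∫_u^∞ p v / v dv`, once `Q` and `p` are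
extended by zero to `(-∞, 0]`. Fubini gives `∫₀^∞ Q = ∫₀^∞ v · (p v / v) dv = ∫₀^∞ p = 1`, and the
mass of a convolution is the product of the masses, so `∫₀^∞ T[p] = (1 · 1 + 1) / 2 = 1`.
Nonnegativity is read off the same formula.
-/

section TailKernel

variable {g : ℝ → ℝ}

noncomputable def tailKernel (g : ℝ → ℝ) : ℝ × ℝ → ℝ :=
  {z : ℝ × ℝ | 0 < z.1 ∧ z.1 < z.2}.indicator fun z => g z.2

theorem tailKernel_section_left (v : ℝ) :
    (fun u => tailKernel g (u, v)) = (Ioo 0 v).indicator fun _ => g v := by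
  ext u
  simp [tailKernel, indicator_apply]

theorem integral_tailKernel_left (v : ℝ) :
    ∫ u, tailKernel g (u, v) = (Ioi 0).indicator (fun v => v * g v) v := by
  rw [tailKernel_section_left, integral_indicator_const _ measurableSet_Ioo, volume_real_Ioo,
    smul_eq_mul]
  by_cases hv : 0 < v
  · simp [hv, hv.le]
  · simp [hv, le_of_not_gt hv]

theorem integral_tailKernel_right (u : ℝ) :
    ∫ v, tailKernel g (u, v) = (Ioi 0).indicator (fun u => ∫ v in Ioi u, g v) u := by
  by_cases hu : 0 < u
  · rw [indicator_of_mem (show u ∈ Ioi 0 from hu), ← integral_indicator measurableSet_Ioi]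
    congr 1 with v
    simp [tailKernel, indicator_apply, hu]
  · simp [tailKernel, hu]

theorem integrable_tailKernel (hg : AEStronglyMeasurable g (volume.restrict (Ioi 0)))
    (hvg : IntegrableOn (fun v => v * g v) (Ioi 0)) :
    Integrable (tailKernel g) (volume.prod volume) := by
  have hmeas : AEStronglyMeasurable (tailKernel g) (volume.prod volume) := by
    -- `g` is only evaluated on `(0, ∞)`, where it is a.e. strongly measurable
    have h : tailKernel g = tailKernel ((Ioi 0).indicator g) :=
      indicator_congr fun z hz => (indicator_of_mem (hz.1.trans hz.2) g).symm
    rw [h]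
    exact ((aestronglyMeasurable_indicator_iff measurableSet_Ioi).2 hg).comp_snd.indicator
      ((measurableSet_lt measurable_const measurable_fst).inter
        (measurableSet_lt measurable_fst measurable_snd))
  refine (integrable_prod_iff' hmeas).2 ⟨.of_forall fun v => ?_, ?_⟩
  · rw [tailKernel_section_left]
    exact (integrableOn_const measure_Ioo_lt_top.ne).integrable_indicator measurableSet_Ioo
  · have h : (fun v => ∫ u, ‖tailKernel g (u, v)‖)
        = (Ioi 0).indicator fun v => v * ‖g v‖ := by
      ext v
      simp only [tailKernel, norm_indicator_eq_indicator_norm]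
      exact integral_tailKernel_left (g := fun v => ‖g v‖) v
    rw [h, integrable_indicator_iff measurableSet_Ioi]
    refine IntegrableOn.congr_fun hvg.norm (fun v hv => ?_) measurableSet_Ioi
    rw [norm_mul, Real.norm_of_nonneg (le_of_lt hv)]

theorem integrableOn_integral_Ioi (hg : AEStronglyMeasurable g (volume.restrict (Ioi 0)))
    (hvg : IntegrableOn (fun v => v * g v) (Ioi 0)) :
    IntegrableOn (fun u => ∫ v in Ioi u, g v) (Ioi 0) := by
  rw [← integrable_indicator_iff measurableSet_Ioi]
  exact (integrable_tailKernel hg hvg).integral_prod_left.congr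
    (.of_forall integral_tailKernel_right)

theorem integral_Ioi_integral_Ioi (hg : AEStronglyMeasurable g (volume.restrict (Ioi 0)))
    (hvg : IntegrableOn (fun v => v * g v) (Ioi 0)) :
    ∫ u in Ioi 0, ∫ v in Ioi u, g v = ∫ v in Ioi 0, v * g v := by
  calc ∫ u in Ioi 0, ∫ v in Ioi u, g v = ∫ u, ∫ v, tailKernel g (u, v) := by
        simp_rw [integral_tailKernel_right, integral_indicator measurableSet_Ioi]
    _ = ∫ v, ∫ u, tailKernel g (u, v) :=
        integral_integral_swap (integrable_tailKernel hg hvg)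
    _ = ∫ v in Ioi 0, v * g v := by
        simp_rw [integral_tailKernel_left, integral_indicator measurableSet_Ioi]

end TailKernel

section Convolution

variable {f g : ℝ → ℝ}

theorem convolution_indicator_Ioi_of_nonpos {x : ℝ} (hx : x ≤ 0) :
    ((Ioi 0).indicator f ⋆ (Ioi 0).indicator g) x = 0 := by
  rw [convolution_def]
  refine integral_eq_zero_of_ae (.of_forall fun t => ?_)
  by_cases ht : 0 < t
  · simp [ht, show ¬ 0 < x - t by linarith]
  · simp [ht]

theorem convolution_indicator_Ioi_of_nonneg {x : ℝ} (hx : 0 ≤ x) :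
    ((Ioi 0).indicator f ⋆ (Ioi 0).indicator g) x = ∫ u in 0..x, f u * g (x - u) := by
  rw [convolution_def, intervalIntegral.integral_of_le hx, integral_Ioc_eq_integral_Ioo,
    ← integral_indicator measurableSet_Ioo]
  congr 1 with t
  simp only [ContinuousLinearMap.lsmul_apply, smul_eq_mul, indicator_apply, mem_Ioi, mem_Ioo,
    sub_pos]
  split_ifs <;> simp_all

theorem integral_Ioi_convolution_indicator_Ioi (hf : IntegrableOn f (Ioi 0))
    (hg : IntegrableOn g (Ioi 0)) :
    ∫ x in Ioi 0, ((Ioi 0).indicator f ⋆ (Ioi 0).indicator g) x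
      = (∫ x in Ioi 0, f x) * ∫ x in Ioi 0, g x := by
  rw [setIntegral_eq_integral_of_forall_compl_eq_zero (s := Ioi 0)
      fun x hx => convolution_indicator_Ioi_of_nonpos (not_lt.1 hx),
    integral_convolution _ (hf.integrable_indicator measurableSet_Ioi)
      (hg.integrable_indicator measurableSet_Ioi),
    integral_indicator measurableSet_Ioi, integral_indicator measurableSet_Ioi]
  rfl

theorem convolution_nonneg_of_ae (hf : 0 ≤ᵐ[volume] f) (hg : 0 ≤ᵐ[volume] g) (x : ℝ) :
    0 ≤ (f ⋆ g) x := by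
  refine integral_nonneg_of_ae ?_
  filter_upwards [hf, (quasiMeasurePreserving_sub_left volume x).ae hg] with t hft hgt
  exact mul_nonneg hft hgt

end Convolution

noncomputable def tailQuot (p : ℝ → ℝ) (u : ℝ) : ℝ := ∫ v in Ioi u, p v / v

section TailQuot

variable {p : ℝ → ℝ}

theorem tailQuot_nonneg (hpos : ∀ᵐ x ∂(volume.restrict (Ioi (0:ℝ))), 0 ≤ p x) {u : ℝ}
    (hu : 0 ≤ u) : 0 ≤ tailQuot p u := by
  refine setIntegral_nonneg_of_ae_restrict ?_
  filter_upwards [ae_restrict_of_ae_restrict_of_subset (Ioi_subset_Ioi hu)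
    (hpos.and (ae_restrict_mem measurableSet_Ioi))] with v hv
  exact div_nonneg hv.1 (le_of_lt hv.2)

theorem integrableOn_mul_div_self (hp : IntegrableOn p (Ioi 0)) :
    IntegrableOn (fun v => v * (p v / v)) (Ioi 0) :=
  hp.congr_fun (fun v hv => (mul_div_cancel₀ (p v) (ne_of_gt hv)).symm) measurableSet_Ioi

theorem integrableOn_tailQuot (hp : IntegrableOn p (Ioi 0))
    (hquot : IntegrableOn (fun u => p u / u) (Ioi 0)) : IntegrableOn (tailQuot p) (Ioi 0) :=
  integrableOn_integral_Ioi hquot.aestronglyMeasurable (integrableOn_mul_div_self hp)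

theorem integral_tailQuot (hp : IntegrableOn p (Ioi 0))
    (hquot : IntegrableOn (fun u => p u / u) (Ioi 0)) :
    ∫ u in Ioi 0, tailQuot p u = ∫ v in Ioi 0, p v := by
  unfold tailQuot
  rw [integral_Ioi_integral_Ioi hquot.aestronglyMeasurable (integrableOn_mul_div_self hp)]
  exact setIntegral_congr_fun measurableSet_Ioi fun v hv => mul_div_cancel₀ (p v) (ne_of_gt hv)

theorem T_eq_convolution {x : ℝ} (hx : 0 ≤ x) :
    T p x = 1 / 2 * ((Ioi 0).indicator (tailQuot p) ⋆ (Ioi 0).indicator p) x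
      + 1 / 2 * tailQuot p x := by
  rw [convolution_indicator_Ioi_of_nonneg hx, T]
  simp only [tailQuot, mul_comm (p _)]

end TailQuot

theorem T_preserves_density (p : ℝ → ℝ)
    (hint : IntegrableOn p (Ioi 0))
    (hpos : ∀ᵐ x ∂(volume.restrict (Ioi (0:ℝ))), 0 ≤ p x)
    (hone : ∫ x in Ioi (0:ℝ), p x = 1)
    (hquot : IntegrableOn (fun u => p u / u) (Ioi 0)) :
    (∀ x ∈ Ioi (0:ℝ), 0 ≤ T p x) ∧ ∫ x in Ioi (0:ℝ), T p x = 1 := by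
  have hT : EqOn (T p) (fun x => 1 / 2 * ((Ioi 0).indicator (tailQuot p) ⋆ (Ioi 0).indicator p) x
      + 1 / 2 * tailQuot p x) (Ioi 0) := fun x hx => T_eq_convolution (le_of_lt hx)
  have hQ := integrableOn_tailQuot hint hquot
  refine ⟨fun x hx => ?_, ?_⟩
  · have hQ₀ : 0 ≤ᵐ[volume] (Ioi 0).indicator (tailQuot p) :=
      .of_forall fun u => indicator_nonneg (fun u hu => tailQuot_nonneg hpos (le_of_lt hu)) u
    have hP₀ : 0 ≤ᵐ[volume] (Ioi 0).indicator p := by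
      filter_upwards [(ae_restrict_iff' measurableSet_Ioi).1 hpos] with u hu
      exact indicator_apply_nonneg hu
    rw [hT hx]
    have := convolution_nonneg_of_ae hQ₀ hP₀ x
    have := tailQuot_nonneg hpos (le_of_lt hx)
    positivity
  · rw [setIntegral_congr_fun measurableSet_Ioi hT, integral_add, integral_const_mul,
      integral_const_mul, integral_Ioi_convolution_indicator_Ioi hQ hint,
      integral_tailQuot hint hquot, hone]
    · norm_num
    · exact ((hQ.integrable_indicator measurableSet_Ioi).integrable_convolution _
        (hint.integrable_indicator measurableSet_Ioi)).const_mul _ |>.integrableOn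
    · exact hQ.const_mul _
end

section
/- If 1 < α < 2, w > 0, and p, q ∈ P_{α,w}, then d_α(T[p], T[q]) ≤ (1/2 + 1/(α+1)) d_α(p,q), where d_α(p,q) = sup_{s>0} |p̂(s) − q̂(s)| / s^α. In particular, since 1/2 + 1/(α+1) < 1 for α > 1, T is a contraction on P_{α,w} in the metric d_α. -/
open MeasureTheory Real Set

noncomputable def laplace (p : ℝ → ℝ) (s : ℝ) : ℝ :=
  ∫ x in Ioi (0:ℝ), Real.exp (-(s * x)) * p x

def memP (α w : ℝ) (p : ℝ → ℝ) : Prop :=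
  IntegrableOn p (Ioi 0) ∧ (∀ᵐ x ∂(volume.restrict (Ioi (0:ℝ))), 0 ≤ p x) ∧
    (∫ x in Ioi (0:ℝ), p x = 1) ∧ IntegrableOn (fun x => x ^ α * p x) (Ioi 0) ∧
    ∫ x in Ioi (0:ℝ), x * p x = w

open scoped ENNReal

/-! For `s > 0` the Laplace transform of `T[p]` factors as `½ (p̂(s) + 1) G_p(s)` with
`G_p(s) = ∫₀^∞ p(v) (1 - e^{-sv})/(sv) dv = s⁻¹ ∫₀^s p̂(t) dt`: the first term of `T[p]` is a
convolution, and all integrands are nonnegative, so Tonelli can be used freely in `ℝ≥0∞`. Then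
`T̂p - T̂q = ½ (p̂ - q̂) G_p + ½ (q̂ + 1) (G_p - G_q)` with `0 ≤ G_p, q̂ ≤ 1`,
`|p̂(s) - q̂(s)| ≤ d s^α` and `|G_p(s) - G_q(s)| ≤ s⁻¹ ∫₀^s d t^α dt = d s^α / (α + 1)`.
Densities are first replaced by measurable nonnegative versions, which changes neither `p̂` nor
`T[p]` on `(0, ∞)`. -/

noncomputable def laplaceENN (f : ℝ → ℝ≥0∞) (s : ℝ) : ℝ≥0∞ :=
  ∫⁻ x in Ioi 0, ENNReal.ofReal (exp (-(s * x))) * f x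

lemma lintegral_Ioo_ofReal_exp_neg_mul {s v : ℝ} (hs : 0 < s) (hv : 0 ≤ v) :
    ∫⁻ u in Ioo 0 v, ENNReal.ofReal (exp (-(s * u))) =
      ENNReal.ofReal ((1 - exp (-(s * v))) / s) := by
  have hcont : Continuous fun u => exp (-(s * u)) := by fun_prop
  rw [← ofReal_integral_eq_lintegral_ofReal
      ((hcont.intervalIntegrable 0 v).1.mono_set Ioo_subset_Ioc_self)
      (.of_forall fun u => (exp_pos _).le),
    ← integral_Ioc_eq_integral_Ioo, ← intervalIntegral.integral_of_le hv,
    intervalIntegral.integral_comp_mul_left (fun y => exp (-y)) hs.ne',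
    intervalIntegral.integral_comp_neg, integral_exp]
  congr 1
  simp only [mul_zero, neg_zero, exp_zero, smul_eq_mul]
  field_simp

lemma lintegral_Ioi_lintegral_Ioi_swap (F : ℝ → ℝ → ℝ≥0∞)
    (hF : Measurable (Function.uncurry F)) :
    ∫⁻ u in Ioi 0, ∫⁻ v in Ioi u, F u v = ∫⁻ v in Ioi 0, ∫⁻ u in Ioo 0 v, F u v := by
  set S : Set (ℝ × ℝ) := {z | 0 < z.1 ∧ z.1 < z.2}
  have hS : MeasurableSet S :=
    (measurableSet_lt measurable_const measurable_fst).inter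
      (measurableSet_lt measurable_fst measurable_snd)
  calc ∫⁻ u in Ioi 0, ∫⁻ v in Ioi u, F u v
      = ∫⁻ u, ∫⁻ v, S.indicator (Function.uncurry F) (u, v) := by
        rw [← lintegral_indicator measurableSet_Ioi]
        congr 1; funext u
        by_cases hu : 0 < u
        · simp [hu, ← lintegral_indicator measurableSet_Ioi, S, indicator_apply]
        · simp [hu, S]
    _ = ∫⁻ v, ∫⁻ u, S.indicator (Function.uncurry F) (u, v) :=
        lintegral_lintegral_swap (hF.indicator hS).aemeasurable
    _ = ∫⁻ v in Ioi 0, ∫⁻ u in Ioo 0 v, F u v := by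
        rw [← lintegral_indicator measurableSet_Ioi]
        congr 1; funext v
        by_cases hv : 0 < v
        · simp [hv, ← lintegral_indicator measurableSet_Ioo, S, indicator_apply]
        · have : ∀ u, ¬ (0 < u ∧ u < v) := fun u h => hv (h.1.trans h.2)
          simp [hv, S, this]

lemma lintegral_Ioi_comp_sub_right (h : ℝ → ℝ≥0∞) (u : ℝ) :
    ∫⁻ x in Ioi u, h (x - u) = ∫⁻ x in Ioi 0, h x := by
  simpa using (measurePreserving_sub_right volume u).setLIntegral_comp_preimage_emb
    (measurableEmbedding_subRight u) h (Ioi 0)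

lemma measurable_lintegral_Ioo_conv {f g : ℝ → ℝ≥0∞} (hf : Measurable f) (hg : Measurable g) :
    Measurable fun x => ∫⁻ u in Ioo 0 x, f (x - u) * g u := by
  set S : Set (ℝ × ℝ) := {z | 0 < z.2 ∧ z.2 < z.1}
  have hS : MeasurableSet S :=
    (measurableSet_lt measurable_const measurable_snd).inter
      (measurableSet_lt measurable_snd measurable_fst)
  have hconv : (fun x => ∫⁻ u in Ioo 0 x, f (x - u) * g u) =
      fun x => ∫⁻ u, S.indicator (fun z => f (z.1 - z.2) * g z.2) (x, u) := by
    funext x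
    rw [← lintegral_indicator measurableSet_Ioo]
    simp [S, indicator_apply]
  rw [hconv]
  exact ((by fun_prop : Measurable fun z : ℝ × ℝ => f (z.1 - z.2) * g z.2).indicator
    hS).lintegral_prod_right'

lemma laplaceENN_conv {f g : ℝ → ℝ≥0∞} (hf : Measurable f) (hg : Measurable g) (s : ℝ) :
    laplaceENN (fun x => ∫⁻ u in Ioo 0 x, f (x - u) * g u) s =
      laplaceENN f s * laplaceENN g s := by
  set E : ℝ → ℝ≥0∞ := fun x => ENNReal.ofReal (exp (-(s * x)))
  have hE : Measurable E := by fun_prop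
  have hEadd : ∀ x u, E x = E (x - u) * E u := fun x u => by
    simp only [E, ← ENNReal.ofReal_mul (exp_pos _).le, ← exp_add]
    ring_nf
  calc laplaceENN (fun x => ∫⁻ u in Ioo 0 x, f (x - u) * g u) s
      = ∫⁻ x in Ioi 0, ∫⁻ u in Ioo 0 x, E x * (f (x - u) * g u) := by
        simp_rw [laplaceENN, ← lintegral_const_mul' _ _ ENNReal.ofReal_ne_top]
        rfl
    _ = ∫⁻ u in Ioi 0, ∫⁻ x in Ioi u, E u * g u * (E (x - u) * f (x - u)) := by
        rw [← lintegral_Ioi_lintegral_Ioi_swap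
          (fun u x => E x * (f (x - u) * g u)) (by fun_prop)]
        refine lintegral_congr fun u => lintegral_congr fun x => ?_
        rw [hEadd x u]
        ring
    _ = ∫⁻ u in Ioi 0, E u * g u * laplaceENN f s := by
        refine setLIntegral_congr_fun measurableSet_Ioi fun u _ => ?_
        rw [lintegral_const_mul _ (by fun_prop), lintegral_Ioi_comp_sub_right (fun y => E y * f y)]
        rfl
    _ = laplaceENN f s * laplaceENN g s := by
        rw [lintegral_mul_const _ (by fun_prop), mul_comm]
        rfl

lemma laplaceENN_lintegral_Ioi {g : ℝ → ℝ≥0∞} (hg : Measurable g) {s : ℝ} (hs : 0 < s) :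
    laplaceENN (fun u => ∫⁻ v in Ioi u, g v) s =
      ∫⁻ v in Ioi 0, ENNReal.ofReal ((1 - exp (-(s * v))) / s) * g v := by
  calc laplaceENN (fun u => ∫⁻ v in Ioi u, g v) s
      = ∫⁻ u in Ioi 0, ∫⁻ v in Ioi u, ENNReal.ofReal (exp (-(s * u))) * g v := by
        simp_rw [laplaceENN, ← lintegral_const_mul' _ _ ENNReal.ofReal_ne_top]
    _ = ∫⁻ v in Ioi 0, (∫⁻ u in Ioo 0 v, ENNReal.ofReal (exp (-(s * u)))) * g v := by
        rw [lintegral_Ioi_lintegral_Ioi_swap _ (by fun_prop)]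
        simp_rw [lintegral_mul_const _
          (by fun_prop : Measurable fun u : ℝ => ENNReal.ofReal (exp (-(s * u))))]
    _ = _ := setLIntegral_congr_fun measurableSet_Ioi fun v hv => by
        rw [lintegral_Ioo_ofReal_exp_neg_mul hs (le_of_lt hv)]

lemma laplaceENN_antitone (f : ℝ → ℝ≥0∞) : Antitone (laplaceENN f) := by
  intro a b hab
  refine setLIntegral_mono' measurableSet_Ioi fun x (hx : 0 < x) => ?_
  gcongr

lemma laplaceENN_le_lintegral (f : ℝ → ℝ≥0∞) {s : ℝ} (hs : 0 ≤ s) :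
    laplaceENN f s ≤ ∫⁻ x in Ioi 0, f x := by
  refine setLIntegral_mono' measurableSet_Ioi fun x hx => ?_
  refine mul_le_of_le_one_left' (ENNReal.ofReal_le_one.mpr ?_)
  exact exp_le_one_iff.mpr (neg_nonpos.mpr (mul_nonneg hs (le_of_lt hx)))

noncomputable def tailENN (P : ℝ → ℝ) (u : ℝ) : ℝ≥0∞ :=
  ∫⁻ v in Ioi u, ENNReal.ofReal (P v / v)

section Density

variable {P : ℝ → ℝ}

lemma laplace_eq_toReal_laplaceENN (hm : Measurable P) (h0 : ∀ x, 0 ≤ P x) (s : ℝ) :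
    laplace P s = (laplaceENN (fun x => ENNReal.ofReal (P x)) s).toReal := by
  rw [laplace, integral_eq_lintegral_of_nonneg_ae
    (.of_forall fun x => mul_nonneg (exp_pos _).le (h0 x)) (by fun_prop)]
  simp_rw [ENNReal.ofReal_mul (exp_pos _).le]
  rfl

lemma ofReal_mul_laplaceENN_tailENN (hm : Measurable P) (h0 : ∀ x, 0 ≤ P x) {s : ℝ}
    (hs : 0 < s) :
    ENNReal.ofReal s * laplaceENN (tailENN P) s =
      ∫⁻ t in Ioo 0 s, laplaceENN (fun x => ENNReal.ofReal (P x)) t := by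
  calc ENNReal.ofReal s * laplaceENN (tailENN P) s
      = ∫⁻ v in Ioi 0, (∫⁻ t in Ioo 0 s, ENNReal.ofReal (exp (-(v * t)))) *
          ENNReal.ofReal (P v) := by
        unfold tailENN
        rw [laplaceENN_lintegral_Ioi (by fun_prop) hs,
          ← lintegral_const_mul' _ _ ENNReal.ofReal_ne_top]
        refine setLIntegral_congr_fun measurableSet_Ioi fun v (hv : 0 < v) => ?_
        rw [lintegral_Ioo_ofReal_exp_neg_mul hv hs.le, ← mul_assoc,
          ← ENNReal.ofReal_mul hs.le, ← ENNReal.ofReal_mul' (div_nonneg (h0 v) hv.le),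
          ← ENNReal.ofReal_mul' (h0 v)]
        congr 1
        field_simp
    _ = ∫⁻ v in Ioi 0, ∫⁻ t in Ioo 0 s, ENNReal.ofReal (exp (-(v * t))) *
          ENNReal.ofReal (P v) :=
        lintegral_congr fun v => (lintegral_mul_const _ (by fun_prop)).symm
    _ = ∫⁻ t in Ioo 0 s, laplaceENN (fun x => ENNReal.ofReal (P x)) t := by
        rw [lintegral_lintegral_swap (by fun_prop)]
        exact lintegral_congr fun t => lintegral_congr fun v => by rw [mul_comm v t]

@[fun_prop]
lemma measurable_tailENN (P : ℝ → ℝ) : Measurable (tailENN P) :=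
  Antitone.measurable fun _ _ hab => lintegral_mono_set (Ioi_subset_Ioi hab)

lemma tailENN_lt_top (hm : Measurable P) (h0 : ∀ x, 0 ≤ P x)
    (h1 : ∫⁻ x in Ioi 0, ENNReal.ofReal (P x) ≤ 1) {u : ℝ} (hu : 0 < u) :
    tailENN P u < ⊤ := by
  calc tailENN P u ≤ ∫⁻ v in Ioi u, ENNReal.ofReal u⁻¹ * ENNReal.ofReal (P v) := by
        refine setLIntegral_mono' measurableSet_Ioi fun v (hv : u < v) => ?_
        rw [← ENNReal.ofReal_mul (inv_nonneg.mpr hu.le), div_eq_inv_mul]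
        gcongr
        exact h0 v
    _ ≤ ENNReal.ofReal u⁻¹ * 1 := by
        rw [lintegral_const_mul _ hm.ennreal_ofReal]
        gcongr
        exact (lintegral_mono_set (Ioi_subset_Ioi hu.le)).trans h1
    _ < ⊤ := by simp

lemma integral_Ioi_div_eq_toReal_tailENN (hm : Measurable P) (h0 : ∀ x, 0 ≤ P x) {u : ℝ}
    (hu : 0 ≤ u) : ∫ v in Ioi u, P v / v = (tailENN P u).toReal :=
  integral_eq_lintegral_of_nonneg_ae ((ae_restrict_iff' measurableSet_Ioi).mpr
    (.of_forall fun v (hv : u < v) => div_nonneg (h0 v) (hu.trans hv.le)))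
    (hm.div measurable_id).aestronglyMeasurable

lemma intervalIntegral_conv_eq_toReal (hm : Measurable P) (h0 : ∀ x, 0 ≤ P x)
    (h1 : ∫⁻ x in Ioi 0, ENNReal.ofReal (P x) ≤ 1) {x : ℝ} (hx : 0 < x) :
    ∫ u in 0..x, P (x - u) * ∫ v in Ioi u, P v / v =
      (∫⁻ u in Ioo 0 x, ENNReal.ofReal (P (x - u)) * tailENN P u).toReal := by
  rw [intervalIntegral.integral_of_le hx.le, integral_Ioc_eq_integral_Ioo,
    setIntegral_congr_fun measurableSet_Ioo fun u (hu : u ∈ Ioo 0 x) => by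
      rw [integral_Ioi_div_eq_toReal_tailENN hm h0 hu.1.le],
    integral_eq_lintegral_of_nonneg_ae (.of_forall fun u => mul_nonneg (h0 _) ENNReal.toReal_nonneg)
      ((by fun_prop : Measurable fun u => P (x - u)).mul
        (measurable_tailENN P).ennreal_toReal).aestronglyMeasurable]
  congr 1
  refine setLIntegral_congr_fun measurableSet_Ioo fun u hu => ?_
  rw [ENNReal.ofReal_mul (h0 _), ENNReal.ofReal_toReal (tailENN_lt_top hm h0 h1 hu.1).ne]

lemma laplaceENN_tailENN_le_one (hm : Measurable P) (h0 : ∀ x, 0 ≤ P x)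
    (h1 : ∫⁻ x in Ioi 0, ENNReal.ofReal (P x) ≤ 1) {s : ℝ} (hs : 0 < s) :
    laplaceENN (tailENN P) s ≤ 1 := by
  have h : ENNReal.ofReal s * laplaceENN (tailENN P) s ≤ ENNReal.ofReal s * 1 := by
    calc ENNReal.ofReal s * laplaceENN (tailENN P) s
        = ∫⁻ t in Ioo 0 s, laplaceENN (fun x => ENNReal.ofReal (P x)) t :=
          ofReal_mul_laplaceENN_tailENN hm h0 hs
      _ ≤ ∫⁻ _ in Ioo 0 s, 1 := setLIntegral_mono' measurableSet_Ioo fun t ht =>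
          (laplaceENN_le_lintegral _ ht.1.le).trans h1
      _ = ENNReal.ofReal s * 1 := by simp
  exact (ENNReal.mul_le_mul_iff_right (ENNReal.ofReal_pos.mpr hs).ne' ENNReal.ofReal_ne_top).mp h

lemma toReal_laplaceENN_tailENN (hm : Measurable P) (h0 : ∀ x, 0 ≤ P x)
    (h1 : ∫⁻ x in Ioi 0, ENNReal.ofReal (P x) ≤ 1) {s : ℝ} (hs : 0 < s) :
    (laplaceENN (tailENN P) s).toReal = s⁻¹ * ∫ t in 0..s, laplace P t := by
  have h := congrArg ENNReal.toReal (ofReal_mul_laplaceENN_tailENN hm h0 hs)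
  rw [ENNReal.toReal_mul, ENNReal.toReal_ofReal hs.le,
    ← integral_toReal (laplaceENN_antitone _).measurable.aemeasurable
      ((ae_restrict_iff' measurableSet_Ioo).mpr (.of_forall fun t ht =>
        ((laplaceENN_le_lintegral _ ht.1.le).trans h1).trans_lt ENNReal.one_lt_top))] at h
  rw [intervalIntegral.integral_of_le hs.le, integral_Ioc_eq_integral_Ioo]
  simp_rw [laplace_eq_toReal_laplaceENN hm h0]
  rw [← h]
  field_simp

/-- `tailENN P u` may grow like `u⁻¹` at `0`, so the convolution can be infinite at some points;
its Laplace transform at `1` is finite, which gives finiteness almost everywhere. -/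
lemma ae_lintegral_Ioo_conv_lt_top (hm : Measurable P) (h0 : ∀ x, 0 ≤ P x)
    (h1 : ∫⁻ x in Ioi 0, ENNReal.ofReal (P x) ≤ 1) :
    ∀ᵐ x ∂volume.restrict (Ioi 0),
      ∫⁻ u in Ioo 0 x, ENNReal.ofReal (P (x - u)) * tailENN P u < ⊤ := by
  have hconv := laplaceENN_conv (f := fun y => ENNReal.ofReal (P y)) (by fun_prop)
    (measurable_tailENN P) 1
  have hfin : laplaceENN (fun y => ENNReal.ofReal (P y)) 1 * laplaceENN (tailENN P) 1 ≠ ⊤ :=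
    ENNReal.mul_ne_top (((laplaceENN_le_lintegral _ zero_le_one).trans h1).trans_lt
      ENNReal.one_lt_top).ne ((laplaceENN_tailENN_le_one hm h0 h1 one_pos).trans_lt
      ENNReal.one_lt_top).ne
  rw [← hconv, laplaceENN] at hfin
  have hmeas := measurable_lintegral_Ioo_conv (f := fun y => ENNReal.ofReal (P y))
    (by fun_prop) (measurable_tailENN P)
  filter_upwards [ae_lt_top ((by fun_prop : Measurable fun x : ℝ =>
    ENNReal.ofReal (exp (-(1 * x)))).mul hmeas) hfin] with x hx
  exact ENNReal.lt_top_of_mul_ne_top_right hx.ne (by simp [exp_pos])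

lemma exp_mul_T_eq_toReal (hm : Measurable P) (h0 : ∀ x, 0 ≤ P x)
    (h1 : ∫⁻ x in Ioi 0, ENNReal.ofReal (P x) ≤ 1) (s : ℝ) {x : ℝ} (hx : 0 < x)
    (hC : ∫⁻ u in Ioo 0 x, ENNReal.ofReal (P (x - u)) * tailENN P u < ⊤) :
    exp (-(s * x)) * T P x =
      (2⁻¹ * (ENNReal.ofReal (exp (-(s * x))) *
          ∫⁻ u in Ioo 0 x, ENNReal.ofReal (P (x - u)) * tailENN P u) +
        2⁻¹ * (ENNReal.ofReal (exp (-(s * x))) * tailENN P x)).toReal := by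
  have htail := tailENN_lt_top hm h0 h1 hx
  rw [ENNReal.toReal_add (by finiteness) (by finiteness)]
  simp only [ENNReal.toReal_mul, ENNReal.toReal_inv, ENNReal.toReal_ofNat,
    ENNReal.toReal_ofReal (exp_pos _).le, T, intervalIntegral_conv_eq_toReal hm h0 h1 hx,
    integral_Ioi_div_eq_toReal_tailENN hm h0 hx.le]
  ring

lemma laplace_T_eq (hm : Measurable P) (h0 : ∀ x, 0 ≤ P x)
    (h1 : ∫⁻ x in Ioi 0, ENNReal.ofReal (P x) ≤ 1) {s : ℝ} (hs : 0 < s) :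
    laplace (T P) s = 1 / 2 * (laplace P s + 1) * (s⁻¹ * ∫ t in 0..s, laplace P t) := by
  have hC := ae_lintegral_Ioo_conv_lt_top hm h0 h1
  have hpos : ∀ᵐ x ∂volume.restrict (Ioi (0 : ℝ)), 0 < x := ae_restrict_mem measurableSet_Ioi
  have hmeasC := measurable_lintegral_Ioo_conv (f := fun y => ENNReal.ofReal (P y))
    (by fun_prop) (measurable_tailENN P)
  have hA := ((laplaceENN_le_lintegral (fun y => ENNReal.ofReal (P y)) hs.le).trans h1).trans_lt
    ENNReal.one_lt_top
  have hB := (laplaceENN_tailENN_le_one hm h0 h1 hs).trans_lt ENNReal.one_lt_top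
  calc laplace (T P) s
      = (2⁻¹ * laplaceENN (fun x => ∫⁻ u in Ioo 0 x, ENNReal.ofReal (P (x - u)) * tailENN P u) s
          + 2⁻¹ * laplaceENN (tailENN P) s).toReal := by
        unfold laplaceENN
        rw [laplace, integral_congr_ae (hC.and hpos |>.mono fun x hx =>
            exp_mul_T_eq_toReal hm h0 h1 s hx.2 hx.1), integral_toReal,
          lintegral_add_right _ (by fun_prop), lintegral_const_mul' _ _ (by norm_num),
          lintegral_const_mul' _ _ (by norm_num)]
        · fun_prop
        · filter_upwards [hC, hpos] with x hCx (hx : 0 < x)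
          have htail := tailENN_lt_top hm h0 h1 hx
          finiteness
    _ = 1 / 2 * (laplace P s + 1) * (s⁻¹ * ∫ t in 0..s, laplace P t) := by
        rw [laplaceENN_conv (f := fun y => ENNReal.ofReal (P y)) (by fun_prop)
            (measurable_tailENN P),
          ENNReal.toReal_add (by finiteness) (by finiteness)]
        simp only [ENNReal.toReal_mul, ENNReal.toReal_inv, ENNReal.toReal_ofNat,
          toReal_laplaceENN_tailENN hm h0 h1 hs, laplace_eq_toReal_laplaceENN hm h0]
        ring

lemma laplace_mem_Icc (hm : Measurable P) (h0 : ∀ x, 0 ≤ P x)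
    (h1 : ∫⁻ x in Ioi 0, ENNReal.ofReal (P x) ≤ 1) {s : ℝ} (hs : 0 ≤ s) :
    laplace P s ∈ Icc 0 1 := by
  rw [laplace_eq_toReal_laplaceENN hm h0]
  exact ⟨ENNReal.toReal_nonneg,
    ENNReal.toReal_le_of_le_ofReal zero_le_one
      (by simpa using (laplaceENN_le_lintegral _ hs).trans h1)⟩

lemma intervalIntegrable_laplace (hm : Measurable P) (h0 : ∀ x, 0 ≤ P x)
    (h1 : ∫⁻ x in Ioi 0, ENNReal.ofReal (P x) ≤ 1) {s : ℝ} (hs : 0 ≤ s) :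
    IntervalIntegrable (laplace P) volume 0 s := by
  have hmeas : Measurable (laplace P) := by
    simp_rw [funext (laplace_eq_toReal_laplaceENN hm h0)]
    exact (laplaceENN_antitone _).measurable.ennreal_toReal
  refine (intervalIntegrable_const (c := (1 : ℝ))).mono_fun' hmeas.aestronglyMeasurable ?_
  rw [uIoc_of_le hs]
  refine (ae_restrict_iff' measurableSet_Ioc).mpr (.of_forall fun t ht => ?_)
  have ht' := laplace_mem_Icc hm h0 h1 ht.1.le
  show ‖laplace P t‖ ≤ 1
  rw [Real.norm_of_nonneg ht'.1]
  exact ht'.2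

end Density

lemma inv_mul_intervalIntegral_mem_Icc {f : ℝ → ℝ} {s : ℝ} (hs : 0 < s)
    (hf : IntervalIntegrable f volume 0 s) (hf01 : ∀ t ∈ Icc 0 s, f t ∈ Icc 0 1) :
    s⁻¹ * ∫ t in 0..s, f t ∈ Icc 0 1 := by
  have hle : ∫ t in 0..s, f t ≤ s := by
    simpa using intervalIntegral.integral_mono_on hs.le hf intervalIntegrable_const
      fun t ht => (hf01 t ht).2
  refine ⟨mul_nonneg (inv_nonneg.mpr hs.le)
    (intervalIntegral.integral_nonneg hs.le fun t ht => (hf01 t ht).1), ?_⟩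
  rw [inv_mul_le_iff₀ hs, mul_one]
  exact hle

lemma abs_intervalIntegral_sub_le_rpow {f g : ℝ → ℝ} {d α s : ℝ} (hα : -1 < α) (hs : 0 ≤ s)
    (hf : IntervalIntegrable f volume 0 s) (hg : IntervalIntegrable g volume 0 s)
    (hfg : ∀ t ∈ Ioo 0 s, |f t - g t| ≤ d * t ^ α) :
    |(∫ t in 0..s, f t) - ∫ t in 0..s, g t| ≤ d * (s ^ (α + 1) / (α + 1)) := by
  rw [← intervalIntegral.integral_sub hf hg]
  calc |∫ t in 0..s, f t - g t| ≤ ∫ t in 0..s, |f t - g t| :=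
        intervalIntegral.abs_integral_le_integral_abs hs
    _ ≤ ∫ t in 0..s, d * t ^ α :=
        intervalIntegral.integral_mono_on_of_le_Ioo hs (hf.sub hg).abs
          ((intervalIntegral.intervalIntegrable_rpow' hα).const_mul d) hfg
    _ = d * (s ^ (α + 1) / (α + 1)) := by
        rw [intervalIntegral.integral_const_mul, integral_rpow (Or.inl hα),
          zero_rpow (by linarith), sub_zero]

lemma abs_half_mul_sub_le {a b G H A B : ℝ} (hb : b ∈ Icc 0 1) (hG : G ∈ Icc 0 1)
    (hab : |a - b| ≤ A) (hGH : |G - H| ≤ B) :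
    |1 / 2 * (a + 1) * G - 1 / 2 * (b + 1) * H| ≤ A / 2 + B := by
  have h1 : |(a - b) * G| ≤ A := by
    rw [abs_mul, abs_of_nonneg hG.1]
    nlinarith [abs_nonneg (a - b), hG.2]
  have h2 : |(b + 1) * (G - H)| ≤ 2 * B := by
    rw [abs_mul, abs_of_nonneg (by linarith [hb.1])]
    nlinarith [abs_nonneg (G - H), hb.2, hb.1]
  calc |1 / 2 * (a + 1) * G - 1 / 2 * (b + 1) * H|
      = 1 / 2 * |(a - b) * G + (b + 1) * (G - H)| := by
        rw [← abs_of_pos (one_half_pos (α := ℝ)), ← abs_mul]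
        ring_nf
    _ ≤ A / 2 + B := by linarith [abs_add_le ((a - b) * G) ((b + 1) * (G - H))]

section AeCongr

variable {p q : ℝ → ℝ}

lemma exists_measurable_nonneg_ae_eq (hint : IntegrableOn p (Ioi 0))
    (hnn : ∀ᵐ x ∂(volume.restrict (Ioi 0)), 0 ≤ p x) (hone : ∫ x in Ioi 0, p x = 1) :
    ∃ P : ℝ → ℝ, Measurable P ∧ (∀ x, 0 ≤ P x) ∧
      ∫⁻ x in Ioi 0, ENNReal.ofReal (P x) = 1 ∧ p =ᵐ[volume.restrict (Ioi 0)] P := by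
  have hsm := hint.aestronglyMeasurable
  have hae : p =ᵐ[volume.restrict (Ioi 0)] fun x => max (hsm.mk p x) 0 := by
    filter_upwards [hsm.ae_eq_mk, hnn] with x hx hx0
    rw [← hx, max_eq_left hx0]
  refine ⟨_, hsm.stronglyMeasurable_mk.measurable.max measurable_const,
    fun x => le_max_right _ _, ?_, hae⟩
  rw [← lintegral_congr_ae (hae.mono fun x (hx : p x = _) => congrArg ENNReal.ofReal hx),
    ← ofReal_integral_eq_lintegral_ofReal hint hnn, hone, ENNReal.ofReal_one]

lemma laplace_congr_ae (h : p =ᵐ[volume.restrict (Ioi 0)] q) : laplace p = laplace q :=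
  funext fun s => integral_congr_ae (h.mono fun x hx => by simp only [hx])

lemma integral_Ioi_div_congr_ae (h : p =ᵐ[volume.restrict (Ioi 0)] q) {u : ℝ} (hu : 0 ≤ u) :
    ∫ v in Ioi u, p v / v = ∫ v in Ioi u, q v / v :=
  integral_congr_ae ((ae_restrict_of_ae_restrict_of_subset (Ioi_subset_Ioi hu) h).mono
    fun v hv => by simp only [hv])

lemma T_congr_ae (h : p =ᵐ[volume.restrict (Ioi 0)] q) {x : ℝ} (hx : 0 ≤ x) :
    T p x = T q x := by
  have hreflect : ∀ r : ℝ → ℝ, ∫ u in 0..x, r (x - u) * ∫ v in Ioi u, r v / v =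
      ∫ y in 0..x, r y * ∫ v in Ioi (x - y), r v / v := fun r => by
    simpa using intervalIntegral.integral_comp_sub_left (a := 0) (b := x)
      (fun y => r y * ∫ v in Ioi (x - y), r v / v) x
  rw [T, T, hreflect, hreflect, integral_Ioi_div_congr_ae h hx]
  congr 2
  refine intervalIntegral.integral_congr_ae ?_
  rw [uIoc_of_le hx]
  filter_upwards [(ae_restrict_iff' measurableSet_Ioi).mp h] with y hy hyx
  rw [hy hyx.1, integral_Ioi_div_congr_ae h (sub_nonneg.mpr hyx.2)]

lemma laplace_T_congr_ae (h : p =ᵐ[volume.restrict (Ioi 0)] q) : laplace (T p) = laplace (T q) :=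
  laplace_congr_ae <| ae_restrict_of_forall_mem measurableSet_Ioi fun _ hx =>
    T_congr_ae h (le_of_lt hx)

end AeCongr

theorem T_contraction_general (α w : ℝ) (hα1 : 1 < α)
    (p q : ℝ → ℝ) (hp : memP α w p) (hq : memP α w q) :
    ∀ d : ℝ, (∀ s : ℝ, 0 < s → |laplace p s - laplace q s| / s ^ α ≤ d) →
      ∀ s : ℝ, 0 < s →
        |laplace (T p) s - laplace (T q) s| / s ^ α ≤ (1/2 + 1/(α + 1)) * d := by
  intro d hd s hs
  obtain ⟨P, hPm, hP0, hP1, hpP⟩ := exists_measurable_nonneg_ae_eq hp.1 hp.2.1 hp.2.2.1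
  obtain ⟨Q, hQm, hQ0, hQ1, hqQ⟩ := exists_measurable_nonneg_ae_eq hq.1 hq.2.1 hq.2.2.1
  rw [laplace_congr_ae hpP, laplace_congr_ae hqQ] at hd
  have hΔ : ∀ t, 0 < t → |laplace P t - laplace Q t| ≤ d * t ^ α := fun t ht =>
    (div_le_iff₀ (rpow_pos_of_pos ht α)).mp (hd t ht)
  have hIP := intervalIntegrable_laplace hPm hP0 hP1.le hs.le
  have hIQ := intervalIntegrable_laplace hQm hQ0 hQ1.le hs.le
  have hG : |(s⁻¹ * ∫ t in 0..s, laplace P t) - s⁻¹ * ∫ t in 0..s, laplace Q t| ≤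
      s⁻¹ * (d * (s ^ (α + 1) / (α + 1))) := by
    rw [← mul_sub, abs_mul, abs_of_pos (inv_pos.mpr hs)]
    exact mul_le_mul_of_nonneg_left (abs_intervalIntegral_sub_le_rpow (by linarith) hs.le
      hIP hIQ fun t ht => hΔ t ht.1) (inv_pos.mpr hs).le
  rw [laplace_T_congr_ae hpP, laplace_T_congr_ae hqQ, laplace_T_eq hPm hP0 hP1.le hs,
    laplace_T_eq hQm hQ0 hQ1.le hs, div_le_iff₀ (rpow_pos_of_pos hs α)]
  calc _ ≤ d * s ^ α / 2 + s⁻¹ * (d * (s ^ (α + 1) / (α + 1))) :=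
        abs_half_mul_sub_le (laplace_mem_Icc hQm hQ0 hQ1.le hs.le)
          (inv_mul_intervalIntegral_mem_Icc hs hIP
            fun t ht => laplace_mem_Icc hPm hP0 hP1.le ht.1)
          (hΔ s hs) hG
    _ = (1 / 2 + 1 / (α + 1)) * d * s ^ α := by
        rw [rpow_add_one hs.ne']
        field_simp

theorem T_contraction (α w : ℝ) (hα1 : 1 < α) (hα2 : α < 2) (hw : 0 < w)
    (p q : ℝ → ℝ) (hp : memP α w p) (hq : memP α w q) :
    ∀ d : ℝ, (∀ s : ℝ, 0 < s → |laplace p s - laplace q s| / s ^ α ≤ d) →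
      ∀ s : ℝ, 0 < s →
        |laplace (T p) s - laplace (T q) s| / s ^ α ≤ (1/2 + 1/(α + 1)) * d :=
  T_contraction_general α w hα1 p q hp hq
end
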